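/- arXiv:2508.11519 — 4 statements merged into one kernel-verified Lean document; each statement's English description precedes it below -/
import Mathlib

section
/- Let f : ℝⁿ → ℝ be L-Lipschitz and μ > 0. Then for every x, the gradient of the uniform smoothing f_μ admits the symmetric representation ∇f_μ(x) = (n/(2μ)) E_{W ~ Unif(S^{n-1})}[(f(x + μW) - f(x - μW)) W], where W is uniform on the unit sphere. -/
/-!
In polar coordinates about the origin, the integral of `g` over the unit ball `B(t, 1)` is
`∫_{S} ∫_0^{R(w,t)} r^(n-1) g(r w) dr dσ(w)`, where `R(w, t) = ⟪w, t⟫ + √(1 - ‖t‖² + ⟪w, t⟫²)`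
is the radius at which the ray through `w` leaves `B(t, 1)`. Since
`R(w, t) = 1 + ⟪w, t⟫ + O(‖t‖²)` uniformly in `w`, and `r ↦ r^(n-1) g(r w)` is Lipschitz near
`r = 1` when `g` is, the inner integral moves by `g(w) ⟪w, t⟫ + O(‖t‖²)`. Hence
`t ↦ ∫_{B(t,1)} g` has gradient `∫_S g(w) w dσ(w)` at `0`, and after rescaling
`∇f_μ(x) = (n/μ) E[f(x + μW) W]`. The sphere measure is invariant under `w ↦ -w`, so
`E[f(x - μW) W] = -E[f(x + μW) W]`, which gives the symmetric form.
-/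

open MeasureTheory Metric
open scoped NNReal ENNReal

/-- Uniform probability measure on the closed unit ball of `ℝⁿ`. -/
noncomputable def unifBall (n : ℕ) : Measure (EuclideanSpace ℝ (Fin n)) :=
  (volume (closedBall (0 : EuclideanSpace ℝ (Fin n)) 1))⁻¹ •
    (volume : Measure (EuclideanSpace ℝ (Fin n))).restrict (closedBall 0 1)

/-- Uniform probability measure on the unit sphere of `ℝⁿ`, viewed as a measure on `ℝⁿ`. -/
noncomputable def unifSphere (n : ℕ) : Measure (EuclideanSpace ℝ (Fin n)) :=
  ((volume : Measure (EuclideanSpace ℝ (Fin n))).toSphere Set.univ)⁻¹ •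
    ((volume : Measure (EuclideanSpace ℝ (Fin n))).toSphere.map Subtype.val)

open Set
open scoped Pointwise RealInnerProductSpace

local notation "dim" => Module.finrank ℝ

theorem abs_sqrt_sub_one_le {q : ℝ} (hq : 0 ≤ q) : |√q - 1| ≤ |q - 1| := by
  have hfactor : q - 1 = (√q - 1) * (√q + 1) := by
    linear_combination -Real.sq_sqrt hq
  rw [hfactor, abs_mul]
  refine le_mul_of_one_le_right (abs_nonneg _) ?_
  rw [abs_of_pos (by positivity)]
  linarith [Real.sqrt_nonneg q]

theorem abs_pow_sub_one_le_of_le_two {r : ℝ} (m : ℕ) (hr0 : 0 ≤ r) (hr2 : r ≤ 2) :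
    |r ^ m - 1| ≤ m * 2 ^ m * |r - 1| := by
  have hmax : max |r| |1| ^ (m - 1) ≤ 2 ^ m := by
    calc max |r| |1| ^ (m - 1) ≤ 2 ^ (m - 1) := by
          gcongr
          exact max_le (by rwa [abs_of_nonneg hr0]) (by norm_num)
      _ ≤ 2 ^ m := pow_le_pow_right₀ one_le_two (Nat.sub_le m 1)
  calc |r ^ m - 1| = |r ^ m - 1 ^ m| := by rw [one_pow]
    _ ≤ |r - 1| * m * max |r| |1| ^ (m - 1) := abs_pow_sub_pow_le _ _ _
    _ ≤ |r - 1| * m * 2 ^ m := by gcongr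
    _ = m * 2 ^ m * |r - 1| := by ring

theorem abs_intervalIntegral_sub_mul_le {φ : ℝ → ℝ} {a b K : ℝ}
    (hφ : IntervalIntegrable φ volume a b) (hK0 : 0 ≤ K)
    (hK : ∀ r ∈ uIcc a b, |φ r - φ a| ≤ K * |r - a|) :
    |(∫ r in a..b, φ r) - φ a * (b - a)| ≤ K * (b - a) ^ 2 := by
  have hsub : (∫ r in a..b, φ r) - φ a * (b - a) = ∫ r in a..b, (φ r - φ a) := by
    rw [intervalIntegral.integral_sub hφ intervalIntegrable_const,
      intervalIntegral.integral_const, smul_eq_mul, mul_comm]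
  have hbound : ∀ r ∈ uIoc a b, ‖φ r - φ a‖ ≤ K * |b - a| := fun r hr ↦ by
    rw [Real.norm_eq_abs]
    refine (hK r (uIoc_subset_uIcc hr)).trans (mul_le_mul_of_nonneg_left ?_ hK0)
    exact abs_sub_left_of_mem_uIcc (uIoc_subset_uIcc hr)
  rw [hsub, ← Real.norm_eq_abs]
  refine (intervalIntegral.norm_integral_le_of_norm_le_const hbound).trans_eq ?_
  rw [mul_assoc, ← sq, sq_abs]

namespace LipschitzWith

theorem abs_le_add_mul {E : Type*} [SeminormedAddCommGroup E] {g : E → ℝ} {K : ℝ≥0}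
    (hg : LipschitzWith K g) (y : E) : |g y| ≤ |g 0| + K * ‖y‖ := by
  have := hg.dist_le_mul y 0
  rw [Real.dist_eq, dist_zero_right] at this
  linarith [abs_sub_abs_le_abs_sub (g y) (g 0)]

theorem abs_pow_mul_smul_sub_le {E : Type*} [NormedAddCommGroup E] [NormedSpace ℝ E]
    {g : E → ℝ} {K : ℝ≥0} (hg : LipschitzWith K g) (m : ℕ) {w : E} (hw : ‖w‖ = 1) {r : ℝ}
    (hr0 : 0 ≤ r) (hr2 : r ≤ 2) :
    |r ^ m * g (r • w) - g w| ≤ (K + (|g 0| + K) * m) * 2 ^ m * |r - 1| := by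
  have hgw : |g w| ≤ |g 0| + K := by simpa [hw] using hg.abs_le_add_mul w
  have hlip : |g (r • w) - g w| ≤ K * |r - 1| := by
    have hdist : dist (r • w) w = |r - 1| := by
      rw [dist_eq_norm, show r • w - w = (r - 1) • w by rw [sub_smul, one_smul], norm_smul, hw,
        mul_one, Real.norm_eq_abs]
    simpa only [Real.dist_eq, hdist] using hg.dist_le_mul (r • w) w
  have hpow : |r ^ m| ≤ 2 ^ m := by
    rw [abs_of_nonneg (by positivity)]
    exact pow_le_pow_left₀ hr0 hr2 m
  calc |r ^ m * g (r • w) - g w| = |r ^ m * (g (r • w) - g w) + g w * (r ^ m - 1)| := by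
        ring_nf
    _ ≤ |r ^ m| * |g (r • w) - g w| + |g w| * |r ^ m - 1| := by
        rw [← abs_mul, ← abs_mul]
        exact abs_add_le _ _
    _ ≤ 2 ^ m * (K * |r - 1|) + (|g 0| + K) * (m * 2 ^ m * |r - 1|) := by
        gcongr
        exact abs_pow_sub_one_le_of_le_two m hr0 hr2
    _ = (K + (|g 0| + K) * m) * 2 ^ m * |r - 1| := by ring

end LipschitzWith

theorem Continuous.integrable_of_compactSpace {X F : Type*} [TopologicalSpace X]
    [CompactSpace X] [MeasurableSpace X] [OpensMeasurableSpace X] [NormedAddCommGroup F]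
    {μ : Measure X} [IsFiniteMeasure μ] {f : X → F} (hf : Continuous f) : Integrable f μ :=
  hf.integrable_of_hasCompactSupport (.of_compactSpace f)

namespace MeasureTheory.Measure

theorem integral_volumeIoiPow {F : Type*} [NormedAddCommGroup F] [NormedSpace ℝ F] (n : ℕ)
    (h : ℝ → F) : ∫ r, h r ∂(volumeIoiPow n) = ∫ r in Ioi (0 : ℝ), r ^ n • h r := by
  simp only [volumeIoiPow, ENNReal.ofReal]
  rw [integral_withDensity_eq_integral_smul (measurable_subtype_coe.pow_const _).real_toNNReal,
    integral_subtype_comap measurableSet_Ioi fun r ↦ Real.toNNReal (r ^ n) • h r]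
  refine setIntegral_congr_fun measurableSet_Ioi fun r hr ↦ ?_
  rw [NNReal.smul_def, Real.coe_toNNReal _ (pow_nonneg (le_of_lt hr) _)]

variable {E : Type*} [NormedAddCommGroup E] [NormedSpace ℝ E] [FiniteDimensional ℝ E]
  [MeasurableSpace E] [BorelSpace E] (μ : Measure E) [μ.IsAddHaarMeasure]

theorem toSphere_map_neg : μ.toSphere.map (fun w ↦ -w) = μ.toSphere := by
  ext s hs
  rw [map_apply measurable_neg hs, toSphere_apply' μ hs, toSphere_apply' μ (measurable_neg hs)]
  have himage : ((↑) '' ((fun w : sphere (0 : E) 1 ↦ -w) ⁻¹' s) : Set E) = -((↑) '' s) := by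
    ext x
    constructor
    · rintro ⟨w, hw, rfl⟩
      exact ⟨-w, hw, rfl⟩
    · rintro ⟨w, hw, hwx⟩
      exact ⟨-w, by simpa using hw, by simp [hwx]⟩
  rw [himage, Set.smul_neg, measure_neg]

theorem integral_toSphere_comp_neg {F : Type*} [NormedAddCommGroup F] [NormedSpace ℝ F]
    (h : sphere (0 : E) 1 → F) : ∫ w, h (-w) ∂μ.toSphere = ∫ w, h w ∂μ.toSphere := by
  conv_rhs => rw [← toSphere_map_neg μ]
  exact ((Homeomorph.neg _).measurableEmbedding.integral_map h).symm

theorem average_toSphere_sub_comp_neg_smul {φ : E → ℝ} (hφ : Continuous φ) :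
    ⨍ w, (φ w - φ (-(w : E))) • (w : E) ∂μ.toSphere =
      (2 : ℝ) • ⨍ w, φ w • (w : E) ∂μ.toSphere := by
  have hint : Integrable (fun w : sphere (0 : E) 1 ↦ φ w • (w : E)) μ.toSphere :=
    (by fun_prop : Continuous _).integrable_of_compactSpace
  have hint_neg : Integrable
      (fun w : sphere (0 : E) 1 ↦ φ ↑(-w) • ((-w : sphere (0 : E) 1) : E)) μ.toSphere :=
    (by fun_prop : Continuous _).integrable_of_compactSpace
  have hsplit : (fun w : sphere (0 : E) 1 ↦ (φ w - φ (-(w : E))) • (w : E)) =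
      fun w : sphere (0 : E) 1 ↦ φ w • (w : E) + φ ↑(-w) • ((-w : sphere (0 : E) 1) : E) := by
    ext w
    simp [add_smul, sub_eq_add_neg]
  rw [average_eq, average_eq, hsplit, integral_add hint hint_neg,
    integral_toSphere_comp_neg μ fun w ↦ φ w • (w : E), ← two_smul ℝ, smul_comm]

theorem integrable_toSphere_prod {F : Type*} [NormedAddCommGroup F] {g : E → F}
    (hg : Integrable g μ) :
    Integrable (fun p : sphere (0 : E) 1 × Ioi (0 : ℝ) ↦ g (p.2.1 • p.1.1))
      (μ.toSphere.prod (volumeIoiPow (dim E - 1))) := by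
  rw [← μ.measurePreserving_homeomorphUnitSphereProd.integrable_comp_emb
      (Homeomorph.measurableEmbedding _)]
  have hcomp : (fun p ↦ g (p.2.1 • p.1.1)) ∘ homeomorphUnitSphereProd E = g ∘ (↑) := by
    ext x
    simp [smul_inv_smul₀ (norm_ne_zero_iff.2 x.2)]
  rw [hcomp, ← integrableOn_iff_comap_subtypeVal (measurableSet_singleton _).compl]
  exact hg.integrableOn

theorem integrable_toSphere_integral_Ioi {F : Type*} [NormedAddCommGroup F] [NormedSpace ℝ F]
    {g : E → F} (hg : Integrable g μ) :
    Integrable (fun w : sphere (0 : E) 1 ↦ ∫ r in Ioi (0 : ℝ), r ^ (dim E - 1) • g (r • (w : E)))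
      μ.toSphere :=
  (integrable_toSphere_prod μ hg).integral_prod_left.congr
    (.of_forall fun w ↦ integral_volumeIoiPow _ fun r ↦ g (r • (w : E)))

variable [Nontrivial E] {F : Type*} [NormedAddCommGroup F] [NormedSpace ℝ F]

theorem integral_eq_integral_toSphere_prod (g : E → F) :
    ∫ x, g x ∂μ = ∫ p, g (p.2.1 • p.1.1) ∂(μ.toSphere.prod (volumeIoiPow (dim E - 1))) := by
  calc ∫ x, g x ∂μ = ∫ x : ({0}ᶜ : Set E), g x ∂(μ.comap (↑)) := by
        rw [integral_subtype_comap (measurableSet_singleton _).compl, restrict_compl_singleton]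
    _ = _ := by
        rw [← μ.measurePreserving_homeomorphUnitSphereProd.integral_comp
          (Homeomorph.measurableEmbedding _) (fun p ↦ g (p.2.1 • p.1.1))]
        congr with x
        simp [smul_inv_smul₀ (norm_ne_zero_iff.2 x.2)]

theorem integral_eq_integral_toSphere_integral_Ioi {g : E → F} (hg : Integrable g μ) :
    ∫ x, g x ∂μ = ∫ w, (∫ r in Ioi (0 : ℝ), r ^ (dim E - 1) • g (r • (w : E))) ∂μ.toSphere := by
  rw [integral_eq_integral_toSphere_prod μ g, integral_prod _ (integrable_toSphere_prod μ hg)]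
  exact integral_congr_ae (.of_forall fun w ↦ integral_volumeIoiPow _ fun r ↦ g (r • (w : E)))

end MeasureTheory.Measure

section ExitRadius

variable {E : Type*} [NormedAddCommGroup E] [InnerProductSpace ℝ E]

noncomputable def exitRadius (w t : E) : ℝ := ⟪w, t⟫ + √(1 - ‖t‖ ^ 2 + ⟪w, t⟫ ^ 2)

variable {w t : E}

theorem exitRadius_zero_right : exitRadius w 0 = 1 := by
  simp [exitRadius]

theorem abs_inner_le_exitRadius_sub_inner (ht : ‖t‖ ≤ 1) :
    |⟪w, t⟫| ≤ exitRadius w t - ⟪w, t⟫ := by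
  rw [exitRadius, add_sub_cancel_left]
  exact Real.abs_le_sqrt (by nlinarith [norm_nonneg t])

theorem exitRadius_nonneg (ht : ‖t‖ ≤ 1) : 0 ≤ exitRadius w t := by
  linarith [abs_inner_le_exitRadius_sub_inner (w := w) ht, neg_abs_le ⟪w, t⟫]

theorem smul_mem_closedBall_iff_le_exitRadius (hw : ‖w‖ = 1) (ht : ‖t‖ ≤ 1) {r : ℝ}
    (hr : 0 < r) : r • w ∈ closedBall t 1 ↔ r ≤ exitRadius w t := by
  have hq : 0 ≤ 1 - ‖t‖ ^ 2 + ⟪w, t⟫ ^ 2 := by nlinarith [norm_nonneg t, sq_nonneg ⟪w, t⟫]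
  have hnorm : ‖r • w - t‖ ^ 2 = (r - ⟪w, t⟫) ^ 2 + ‖t‖ ^ 2 - ⟪w, t⟫ ^ 2 := by
    rw [norm_sub_sq_real, norm_smul, real_inner_smul_left, hw, Real.norm_of_nonneg hr.le]
    ring
  have hlower : -√(1 - ‖t‖ ^ 2 + ⟪w, t⟫ ^ 2) ≤ r - ⟪w, t⟫ := by
    have := abs_inner_le_exitRadius_sub_inner (w := w) ht
    rw [exitRadius, add_sub_cancel_left] at this
    linarith [le_abs_self ⟪w, t⟫]
  have hsqrt : (r - ⟪w, t⟫) ^ 2 ≤ 1 - ‖t‖ ^ 2 + ⟪w, t⟫ ^ 2 ↔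
      r - ⟪w, t⟫ ≤ √(1 - ‖t‖ ^ 2 + ⟪w, t⟫ ^ 2) :=
    (Real.sq_le hq).trans (and_iff_right hlower)
  rw [mem_closedBall_iff_norm, ← sq_le_one_iff₀ (norm_nonneg _), hnorm, exitRadius,
    ← sub_le_iff_le_add', ← hsqrt]
  constructor <;> intro h <;> linarith

theorem abs_exitRadius_sub_one_sub_inner_le (hw : ‖w‖ = 1) (ht : ‖t‖ ≤ 1) :
    |exitRadius w t - 1 - ⟪w, t⟫| ≤ ‖t‖ ^ 2 := by
  have hq : 0 ≤ 1 - ‖t‖ ^ 2 + ⟪w, t⟫ ^ 2 := by nlinarith [norm_nonneg t, sq_nonneg ⟪w, t⟫]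
  have hinner : ⟪w, t⟫ ^ 2 ≤ ‖t‖ ^ 2 := by
    have := abs_real_inner_le_norm w t
    rw [hw, one_mul] at this
    exact sq_le_sq.2 (by rwa [abs_norm])
  calc |exitRadius w t - 1 - ⟪w, t⟫| = |√(1 - ‖t‖ ^ 2 + ⟪w, t⟫ ^ 2) - 1| := by
        rw [exitRadius]
        ring_nf
    _ ≤ |1 - ‖t‖ ^ 2 + ⟪w, t⟫ ^ 2 - 1| := abs_sqrt_sub_one_le hq
    _ ≤ ‖t‖ ^ 2 := abs_le.2 ⟨by linarith [sq_nonneg ⟪w, t⟫], by linarith [sq_nonneg ‖t‖]⟩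

theorem abs_exitRadius_sub_one_le (hw : ‖w‖ = 1) (ht : ‖t‖ ≤ 1) :
    |exitRadius w t - 1| ≤ 2 * ‖t‖ := by
  have hinner : |⟪w, t⟫| ≤ ‖t‖ := by simpa [hw] using abs_real_inner_le_norm w t
  calc |exitRadius w t - 1| = |(exitRadius w t - 1 - ⟪w, t⟫) + ⟪w, t⟫| := by ring_nf
    _ ≤ |exitRadius w t - 1 - ⟪w, t⟫| + |⟪w, t⟫| := abs_add_le _ _
    _ ≤ ‖t‖ ^ 2 + ‖t‖ := add_le_add (abs_exitRadius_sub_one_sub_inner_le hw ht) hinner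
    _ ≤ 2 * ‖t‖ := by nlinarith [norm_nonneg t]

theorem LipschitzWith.abs_integral_exitRadius_sub_le {g : E → ℝ} {K : ℝ≥0}
    (hg : LipschitzWith K g) (m : ℕ) (hw : ‖w‖ = 1) (ht : ‖t‖ ≤ 1 / 2) :
    |(∫ r in 0..exitRadius w t, r ^ m * g (r • w)) - (∫ r in 0..1, r ^ m * g (r • w)) -
        g w * ⟪w, t⟫| ≤ (4 * ((K + (|g 0| + K) * m) * 2 ^ m) + (|g 0| + K)) * ‖t‖ ^ 2 := by
  set C := (K + (|g 0| + K) * m) * 2 ^ m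
  set R := exitRadius w t
  have hC : 0 ≤ C := by positivity
  have ht1 : ‖t‖ ≤ 1 := by linarith [norm_nonneg t]
  have hR1 : |R - 1| ≤ 2 * ‖t‖ := abs_exitRadius_sub_one_le hw ht1
  have hφ : Continuous fun r : ℝ ↦ r ^ m * g (r • w) := by
    have := hg.continuous
    fun_prop
  have hsplit : (∫ r in 0..R, r ^ m * g (r • w)) - (∫ r in 0..1, r ^ m * g (r • w)) =
      ∫ r in 1..R, r ^ m * g (r • w) :=
    intervalIntegral.integral_interval_sub_left (hφ.intervalIntegrable _ _)
      (hφ.intervalIntegrable _ _)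
  have hlin : |(∫ r in 1..R, r ^ m * g (r • w)) - g w * (R - 1)| ≤ C * (R - 1) ^ 2 := by
    have := abs_intervalIntegral_sub_mul_le (hφ.intervalIntegrable 1 R) hC fun r hr ↦ ?_
    · simpa using this
    have hr1 : |r - 1| ≤ 1 := by linarith [abs_sub_left_of_mem_uIcc hr]
    simpa using hg.abs_pow_mul_smul_sub_le m hw (r := r) (by linarith [(abs_le.1 hr1).1])
      (by linarith [(abs_le.1 hr1).2])
  have hgw : |g w| ≤ |g 0| + K := by simpa [hw] using hg.abs_le_add_mul w
  calc _ = |((∫ r in 1..R, r ^ m * g (r • w)) - g w * (R - 1)) + g w * (R - 1 - ⟪w, t⟫)| := by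
        rw [hsplit]
        ring_nf
    _ ≤ |(∫ r in 1..R, r ^ m * g (r • w)) - g w * (R - 1)| + |g w| * |R - 1 - ⟪w, t⟫| := by
        rw [← abs_mul]
        exact abs_add_le _ _
    _ ≤ C * (R - 1) ^ 2 + (|g 0| + K) * ‖t‖ ^ 2 :=
        add_le_add hlin (mul_le_mul hgw (abs_exitRadius_sub_one_sub_inner_le hw ht1)
          (abs_nonneg _) (by positivity))
    _ ≤ C * (2 * ‖t‖) ^ 2 + (|g 0| + K) * ‖t‖ ^ 2 := by
        have := sq_le_sq' (abs_le.1 hR1).1 (abs_le.1 hR1).2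
        gcongr
    _ = (4 * C + (|g 0| + K)) * ‖t‖ ^ 2 := by ring

theorem setIntegral_Ioi_indicator_closedBall (g : E → ℝ) (n : ℕ) (hw : ‖w‖ = 1)
    (ht : ‖t‖ ≤ 1) :
    ∫ r in Ioi (0 : ℝ), r ^ n • (closedBall t 1).indicator g (r • w) =
      ∫ r in 0..exitRadius w t, r ^ n * g (r • w) := by
  have hcongr : EqOn (fun r : ℝ ↦ r ^ n • (closedBall t 1).indicator g (r • w))
      ((Ioc 0 (exitRadius w t)).indicator fun r ↦ r ^ n * g (r • w)) (Ioi 0) := by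
    intro r (hr : 0 < r)
    by_cases hR : r ≤ exitRadius w t
    · simp [(smul_mem_closedBall_iff_le_exitRadius hw ht hr).2 hR, hr, hR]
    · simp [mt (smul_mem_closedBall_iff_le_exitRadius hw ht hr).1 hR, hR]
  rw [setIntegral_congr_fun measurableSet_Ioi hcongr, setIntegral_indicator measurableSet_Ioc,
    inter_eq_right.2 Ioc_subset_Ioi_self, intervalIntegral.integral_of_le (exitRadius_nonneg ht)]

end ExitRadius

theorem setIntegral_closedBall_eq_setIntegral_closedBall_zero {E F : Type*}
    [SeminormedAddCommGroup E] [MeasurableSpace E] [MeasurableAdd E] [NormedAddCommGroup F]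
    [NormedSpace ℝ F] (ν : Measure E) [ν.IsAddRightInvariant] (g : E → F) (t : E) (r : ℝ) :
    ∫ u in closedBall t r, g u ∂ν = ∫ u in closedBall 0 r, g (u + t) ∂ν := by
  rw [← (measurePreserving_add_right ν t).setIntegral_preimage_emb (measurableEmbedding_addRight t),
    preimage_add_right_closedBall, sub_self]

section BallIntegral

variable {E : Type*} [NormedAddCommGroup E] [InnerProductSpace ℝ E] [FiniteDimensional ℝ E]
  [MeasurableSpace E] [BorelSpace E] (ν : Measure E) [ν.IsAddHaarMeasure]

theorem integrable_integral_exitRadius {g : E → ℝ} {t : E}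
    (hg : IntegrableOn g (closedBall t 1) ν) (ht : ‖t‖ ≤ 1) :
    Integrable (fun w : sphere (0 : E) 1 ↦
      ∫ r in 0..exitRadius (w : E) t, r ^ (dim E - 1) * g (r • (w : E))) ν.toSphere :=
  (ν.integrable_toSphere_integral_Ioi
    ((integrable_indicator_iff measurableSet_closedBall).2 hg)).congr
    (.of_forall fun w ↦ setIntegral_Ioi_indicator_closedBall _ _ (norm_eq_of_mem_sphere w) ht)

theorem setIntegral_closedBall_eq_integral_toSphere [Nontrivial E] {g : E → ℝ} {t : E}
    (hg : IntegrableOn g (closedBall t 1) ν) (ht : ‖t‖ ≤ 1) :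
    ∫ u in closedBall t 1, g u ∂ν =
      ∫ w, (∫ r in 0..exitRadius (w : E) t, r ^ (dim E - 1) * g (r • (w : E))) ∂ν.toSphere := by
  rw [← integral_indicator measurableSet_closedBall,
    ν.integral_eq_integral_toSphere_integral_Ioi
      ((integrable_indicator_iff measurableSet_closedBall).2 hg)]
  exact integral_congr_ae
    (.of_forall fun w ↦ setIntegral_Ioi_indicator_closedBall _ _ (norm_eq_of_mem_sphere w) ht)

theorem LipschitzWith.exists_norm_setIntegral_closedBall_sub_sub_inner_le [Nontrivial E]
    {g : E → ℝ} {K : ℝ≥0} (hg : LipschitzWith K g) :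
    ∃ C, ∀ t : E, ‖t‖ ≤ 1 / 2 →
      ‖(∫ u in closedBall t 1, g u ∂ν) - (∫ u in closedBall 0 1, g u ∂ν) -
        ⟪∫ w, g w • (w : E) ∂ν.toSphere, t⟫‖ ≤ C * ‖t‖ ^ 2 := by
  set A : E → sphere (0 : E) 1 → ℝ := fun t w ↦
    ∫ r in 0..exitRadius (w : E) t, r ^ (dim E - 1) * g (r • (w : E))
  set C := 4 * ((K + (|g 0| + K) * (dim E - 1 : ℕ)) * 2 ^ (dim E - 1)) + (|g 0| + K)
  have hgc := hg.continuous
  have hgint (t : E) : IntegrableOn g (closedBall t 1) ν :=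
    hgc.continuousOn.integrableOn_compact (isCompact_closedBall t 1)
  refine ⟨C * ν.toSphere.real univ, fun t ht ↦ ?_⟩
  have ht1 : ‖t‖ ≤ 1 := by linarith [norm_nonneg t]
  have hA (w : sphere (0 : E) 1) : ‖A t w - A 0 w - g w * ⟪(w : E), t⟫‖ ≤ C * ‖t‖ ^ 2 := by
    simpa only [A, exitRadius_zero_right, Real.norm_eq_abs] using
      hg.abs_integral_exitRadius_sub_le _ (norm_eq_of_mem_sphere w) ht
  have hAt : Integrable (A t) ν.toSphere := integrable_integral_exitRadius ν (hgint t) ht1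
  have hA0 : Integrable (A 0) ν.toSphere := integrable_integral_exitRadius ν (hgint 0) (by simp)
  have hlinear : Integrable (fun w : sphere (0 : E) 1 ↦ g w * ⟪(w : E), t⟫) ν.toSphere :=
    (by fun_prop : Continuous _).integrable_of_compactSpace
  have hinner : ⟪∫ w, g w • (w : E) ∂ν.toSphere, t⟫ = ∫ w, g w * ⟪(w : E), t⟫ ∂ν.toSphere := by
    rw [real_inner_comm, ← integral_inner (by fun_prop : Continuous _).integrable_of_compactSpace]
    simp only [real_inner_smul_right, real_inner_comm t]
  rw [setIntegral_closedBall_eq_integral_toSphere ν (hgint t) ht1,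
    setIntegral_closedBall_eq_integral_toSphere ν (hgint 0) (by simp), hinner,
    ← integral_sub hAt hA0, ← integral_sub (f := fun w ↦ A t w - A 0 w) (hAt.sub hA0) hlinear]
  exact (norm_integral_le_of_norm_le_const (.of_forall hA)).trans_eq (mul_right_comm _ _ _)

theorem hasGradientAt_setIntegral_closedBall_zero [Nontrivial E] {g : E → ℝ} {K : ℝ≥0}
    (hg : LipschitzWith K g) :
    HasGradientAt (fun t ↦ ∫ u in closedBall t 1, g u ∂ν) (∫ w, g w • (w : E) ∂ν.toSphere) 0 := by
  obtain ⟨C, hC⟩ := hg.exists_norm_setIntegral_closedBall_sub_sub_inner_le ν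
  rw [hasGradientAt_iff_hasFDerivAt, hasFDerivAt_iff_isLittleO_nhds_zero]
  refine (Asymptotics.IsBigO.of_bound C ?_).trans_isLittleO
    (Asymptotics.isLittleO_norm_pow_id one_lt_two)
  filter_upwards [closedBall_mem_nhds (0 : E) (by norm_num : (0 : ℝ) < 1 / 2)] with t ht
  simpa using hC t (mem_closedBall_zero_iff.1 ht)

theorem hasGradientAt_setAverage_closedBall [Nontrivial E] {f : E → ℝ} {K : ℝ≥0}
    (hf : LipschitzWith K f) {ρ : ℝ} (hρ : 0 < ρ) (x : E) :
    HasGradientAt (fun z ↦ ⨍ u in closedBall (0 : E) 1, f (z + ρ • u) ∂ν)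
      ((dim E / ρ) • ⨍ w, f (x + ρ • (w : E)) • (w : E) ∂ν.toSphere) x := by
  set V := ν.real (closedBall (0 : E) 1)
  set G := ∫ w, f (x + ρ • (w : E)) • (w : E) ∂ν.toSphere
  have hg : LipschitzWith _ fun u ↦ f (x + ρ • u) :=
    hf.comp ((isometry_add_left x).lipschitz.comp (lipschitzWith_smul ρ))
  have hΨ : HasFDerivAt (fun t ↦ ∫ u in closedBall t 1, f (x + ρ • u) ∂ν)
      (InnerProductSpace.toDual ℝ E G) (ρ⁻¹ • (x - x)) := by
    simpa using hasGradientAt_iff_hasFDerivAt.1 (hasGradientAt_setIntegral_closedBall_zero ν hg)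
  have haffine : HasFDerivAt (fun z ↦ ρ⁻¹ • (z - x)) (ρ⁻¹ • ContinuousLinearMap.id ℝ E) x :=
    ((hasFDerivAt_id x).sub_const x).const_smul ρ⁻¹
  have hrescale (z : E) : ⨍ u in closedBall (0 : E) 1, f (z + ρ • u) ∂ν =
      V⁻¹ * ∫ u in closedBall (ρ⁻¹ • (z - x)) 1, f (x + ρ • u) ∂ν := by
    rw [setAverage_eq, smul_eq_mul,
      setIntegral_closedBall_eq_setIntegral_closedBall_zero ν _ (ρ⁻¹ • (z - x))]
    refine congrArg (V⁻¹ * ·) (integral_congr_ae (.of_forall fun u ↦ ?_))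
    simp only [smul_add, smul_inv_smul₀ hρ.ne']
    congr 1
    abel
  have hV : ν.toSphere.real univ = dim E * V := by
    rw [Measure.toSphere_real_apply_univ, ← Measure.addHaar_real_closedBall_eq_addHaar_real_ball]
  rw [hasGradientAt_iff_hasFDerivAt, funext hrescale]
  refine ((hΨ.comp x haffine).const_mul V⁻¹).congr_fderiv ?_
  have hdim : (dim E : ℝ) ≠ 0 := Nat.cast_ne_zero.2 Module.finrank_pos.ne'
  ext v
  simp only [ContinuousLinearMap.comp_smulₛₗ, map_inv₀, Real.ringHom_apply,
    ContinuousLinearMap.comp_id, smul_apply,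
    InnerProductSpace.toDual_apply_apply, smul_eq_mul, average_eq, hV, mul_inv_rev, map_smul, G]
  field_simp

end BallIntegral

section UniformMeasures

variable {n : ℕ}

theorem integral_unifBall {F : Type*} [NormedAddCommGroup F] [NormedSpace ℝ F]
    (h : EuclideanSpace ℝ (Fin n) → F) :
    ∫ u, h u ∂(unifBall n) = ⨍ u in closedBall 0 1, h u :=
  (setAverage_eq' _ h _).symm

theorem integral_unifSphere {F : Type*} [NormedAddCommGroup F] [NormedSpace ℝ F]
    (h : EuclideanSpace ℝ (Fin n) → F) :
    ∫ w, h w ∂(unifSphere n) =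
      ⨍ w, h w ∂(volume : Measure (EuclideanSpace ℝ (Fin n))).toSphere := by
  rw [unifSphere, integral_smul_measure, average_eq', integral_smul_measure,
    (MeasurableEmbedding.subtype_coe isClosed_sphere.measurableSet).integral_map]

end UniformMeasures

/-- Symmetric representation of the gradient of the uniform smoothing:
`∇f_μ(x) = (n/(2μ)) E_{W ~ Unif(S^{n-1})}[(f(x+μW) - f(x-μW)) W]`. -/
theorem smoothing_gradient_symmetric {n : ℕ} (f : EuclideanSpace ℝ (Fin n) → ℝ) (L : ℝ≥0)
    (hf : LipschitzWith L f) (μ : ℝ) (hμ : 0 < μ) (x : EuclideanSpace ℝ (Fin n)) :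
    gradient (fun z => ∫ u, f (z + μ • u) ∂(unifBall n)) x =
      ((n : ℝ) / (2 * μ)) •
        ∫ w, (f (x + μ • w) - f (x - μ • w)) • w ∂(unifSphere n) := by
  rcases subsingleton_or_nontrivial (EuclideanSpace ℝ (Fin n)) with _ | _
  · exact Subsingleton.elim _ _
  have hφ : Continuous fun w ↦ f (x + μ • w) := hf.continuous.comp (by fun_prop)
  have hsymm := volume.average_toSphere_sub_comp_neg_smul hφ
  simp only [smul_neg, ← sub_eq_add_neg] at hsymm
  simp only [integral_unifBall, integral_unifSphere]
  rw [(hasGradientAt_setAverage_closedBall volume hf hμ x).gradient, hsymm,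
    finrank_euclideanSpace_fin, smul_smul]
  congr 1
  field_simp
end

section
/- Let f : ℝⁿ → ℝ be L-Lipschitz and μ > 0. Then for all x ∈ ℝⁿ, the gradient of the uniform smoothing satisfies ∇f_μ(x) ∈ ∂̄_μ f(x), the μ-Goldstein subdifferential of f at x. -/
open MeasureTheory Metric Filter
open scoped NNReal ENNReal Topology

variable {n : ℕ}

/-- Clarke generalized directional derivative of `f` at `x` in direction `v`. -/
noncomputable def clarkeDeriv (f : EuclideanSpace ℝ (Fin n) → ℝ)
    (x v : EuclideanSpace ℝ (Fin n)) : ℝ :=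
  limsup (fun p : EuclideanSpace ℝ (Fin n) × ℝ => (f (p.1 + p.2 • v) - f p.1) / p.2)
    ((𝓝 x) ×ˢ (𝓝[>] (0 : ℝ)))

/-- Clarke subdifferential of `f` at `x`. -/
def clarkeSubdiff (f : EuclideanSpace ℝ (Fin n) → ℝ) (x : EuclideanSpace ℝ (Fin n)) :
    Set (EuclideanSpace ℝ (Fin n)) :=
  {g | ∀ v, (inner ℝ g v : ℝ) ≤ clarkeDeriv f x v}

/-- The `μ`-Goldstein subdifferential `∂̄_μ f(x) = conv(⋃_{y ∈ B̄_μ(x)} ∂̄f(y))`. -/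
def goldsteinSubdiff (μ : ℝ) (f : EuclideanSpace ℝ (Fin n) → ℝ)
    (x : EuclideanSpace ℝ (Fin n)) : Set (EuclideanSpace ℝ (Fin n)) :=
  convexHull ℝ (⋃ y ∈ closedBall x μ, clarkeSubdiff f y)

/-!
By Rademacher's theorem `f` is differentiable almost everywhere, so differentiating under the
integral (with the Lipschitz constant as dominating bound) gives
`∇f_μ(x) = 𝔼[∇f(x + μU)]`. Wherever `f` is differentiable its gradient lies in the Clarke
subdifferential, and `x + μU ∈ B̄_μ(x)`, so the integrand takes values almost surely in
`S = ⋃_{y ∈ B̄_μ(x)} ∂̄f(y)`. The set `S` is compact: it is bounded by `L`, and it is closed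
because the Clarke derivative is upper semicontinuous. By Carathéodory its convex hull is compact
as well, and the mean of a random vector with values in a closed convex set lies in that set.
-/

open Set ProbabilityTheory

section ConvexHull

variable {E : Type*} [NormedAddCommGroup E] [NormedSpace ℝ E] [FiniteDimensional ℝ E]

theorem mem_convexHull_iff_exists_fin_le_finrank_succ {s : Set E} {x : E} :
    x ∈ convexHull ℝ s ↔ ∃ k ≤ Module.finrank ℝ E + 1, ∃ w ∈ stdSimplex ℝ (Fin k),
      ∃ z : Fin k → E, (∀ i, z i ∈ s) ∧ ∑ i, w i • z i = x := by
  constructor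
  · intro hx
    obtain ⟨ι, _, z, w, hzs, hz, hw, hw1, hwz⟩ := eq_pos_convex_span_of_mem_convexHull hx
    let e := Fintype.equivFin ι
    have hcard : Fintype.card ι ≤ Module.finrank ℝ E + 1 :=
      hz.card_le_finrank_succ.trans (by gcongr; exact Submodule.finrank_le _)
    refine ⟨Fintype.card ι, hcard, w ∘ e.symm, ⟨fun i => (hw _).le, ?_⟩, z ∘ e.symm,
      fun i => hzs (mem_range_self _), ?_⟩
    · simpa only [Function.comp_apply, e.symm.sum_comp w] using hw1
    · simpa only [Function.comp_apply, e.symm.sum_comp fun i => w i • z i] using hwz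
  · rintro ⟨k, -, w, ⟨hw0, hw1⟩, z, hzs, rfl⟩
    exact (convex_convexHull ℝ s).sum_mem (fun i _ => hw0 i) hw1
      fun i _ => subset_convexHull ℝ s (hzs i)

theorem convexHull_eq_biUnion_image_stdSimplex (s : Set E) :
    convexHull ℝ s = ⋃ k ∈ Finset.range (Module.finrank ℝ E + 2),
      (fun p : (Fin k → ℝ) × (Fin k → E) => ∑ i, p.1 i • p.2 i) ''
        (stdSimplex ℝ (Fin k) ×ˢ univ.pi fun _ => s) := by
  ext x
  simp only [mem_convexHull_iff_exists_fin_le_finrank_succ, mem_iUnion, Finset.mem_range,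
    Nat.lt_succ_iff, mem_image, Prod.exists, mem_prod, mem_univ_pi, exists_prop]
  grind

theorem IsCompact.convexHull {s : Set E} (hs : IsCompact s) : IsCompact (convexHull ℝ s) := by
  rw [convexHull_eq_biUnion_image_stdSimplex]
  exact (Finset.range _).isCompact_biUnion fun k _ =>
    ((isCompact_stdSimplex _ _).prod (isCompact_univ_pi fun _ => hs)).image
      (continuous_finsetSum _ fun i _ =>
        ((continuous_apply i).comp continuous_fst).smul
          ((continuous_apply i).comp continuous_snd))

end ConvexHull

section Smoothing

variable {E : Type*} [NormedAddCommGroup E] [NormedSpace ℝ E] [FiniteDimensional ℝ E]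
  [MeasurableSpace E] [BorelSpace E]
  {α : Type*} [MeasurableSpace α] {ν : Measure α} [IsFiniteMeasure ν]
  {f : E → ℝ} {L : ℝ≥0} {g : α → E} {x : E}

theorem LipschitzWith.hasFDerivAt_integral_comp_add (hf : LipschitzWith L f) (hg : Measurable g)
    (hint : Integrable (fun a => f (x + g a)) ν)
    (hdiff : ∀ᵐ a ∂ν, DifferentiableAt ℝ f (x + g a)) :
    Integrable (fun a => fderiv ℝ f (x + g a)) ν ∧
      HasFDerivAt (fun z => ∫ a, f (z + g a) ∂ν) (∫ a, fderiv ℝ f (x + g a) ∂ν) x := by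
  refine hasFDerivAt_integral_of_dominated_loc_of_lip (bound := fun _ => (L : ℝ)) univ_mem
    (Eventually.of_forall fun z =>
      (hf.continuous.measurable.comp (measurable_const.add hg)).aestronglyMeasurable)
    hint ((measurable_fderiv ℝ f).comp (measurable_const.add hg)).aestronglyMeasurable
    (Eventually.of_forall fun a => ?_) (integrable_const _) ?_
  · simpa [Function.comp_def] using hf.comp (IsometryEquiv.addRight (g a)).isometry.lipschitz
  · filter_upwards [hdiff] with a ha
    exact (hasFDerivAt_comp_add_right (g a)).2 ha.hasFDerivAt

end Smoothing

theorem LipschitzWith.ae_differentiableAt_add_smul {E F : Type*} [NormedAddCommGroup E]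
    [NormedSpace ℝ E] [FiniteDimensional ℝ E] [MeasurableSpace E] [BorelSpace E]
    [NormedAddCommGroup F] [NormedSpace ℝ F] [FiniteDimensional ℝ F]
    (μ : Measure E) [μ.IsAddHaarMeasure] {f : E → F} {L : ℝ≥0} (hf : LipschitzWith L f)
    (x : E) {r : ℝ} (hr : r ≠ 0) :
    ∀ᵐ u ∂μ, DifferentiableAt ℝ f (x + r • u) :=
  ((measurePreserving_add_left μ x).quasiMeasurePreserving.comp
    (Measure.quasiMeasurePreserving_smul μ hr)).ae hf.ae_differentiableAt

section SmoothingGradient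

variable {E : Type*} [NormedAddCommGroup E] [InnerProductSpace ℝ E] [FiniteDimensional ℝ E]
  [MeasurableSpace E] [BorelSpace E]
  {α : Type*} [MeasurableSpace α] {ν : Measure α} [IsFiniteMeasure ν]
  {f : E → ℝ} {L : ℝ≥0} {g : α → E} {x : E}

theorem LipschitzWith.hasGradientAt_integral_comp_add (hf : LipschitzWith L f) (hg : Measurable g)
    (hint : Integrable (fun a => f (x + g a)) ν)
    (hdiff : ∀ᵐ a ∂ν, DifferentiableAt ℝ f (x + g a)) :
    Integrable (fun a => gradient f (x + g a)) ν ∧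
      HasGradientAt (fun z => ∫ a, f (z + g a) ∂ν) (∫ a, gradient f (x + g a) ∂ν) x := by
  obtain ⟨hint', hderiv⟩ := hf.hasFDerivAt_integral_comp_add hg hint hdiff
  let toDual := InnerProductSpace.toDual ℝ E
  refine ⟨toDual.symm.toLinearIsometry.toContinuousLinearMap.integrable_comp hint', ?_⟩
  have hgrad : ∫ a, gradient f (x + g a) ∂ν = toDual.symm (∫ a, fderiv ℝ f (x + g a) ∂ν) :=
    toDual.symm.toLinearIsometry.integral_comp_comm _
  rwa [hasGradientAt_iff_hasFDerivAt, hgrad, LinearIsometryEquiv.apply_symm_apply]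

end SmoothingGradient

section DifferenceQuotient

variable {E : Type*} [SeminormedAddCommGroup E] [NormedSpace ℝ E] {f : E → ℝ} {L : ℝ≥0}

theorem LipschitzWith.abs_div_sub_le (hf : LipschitzWith L f) (z v : E) {t : ℝ} (ht : 0 < t) :
    |(f (z + t • v) - f z) / t| ≤ L * ‖v‖ := by
  rw [abs_div, abs_of_pos ht, div_le_iff₀ ht, ← Real.dist_eq]
  calc dist (f (z + t • v)) (f z) ≤ L * dist (z + t • v) z := hf.dist_le_mul _ _
    _ = L * ‖v‖ * t := by
      rw [dist_eq_norm, add_sub_cancel_left, norm_smul, Real.norm_of_nonneg ht.le]; ring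

theorem LipschitzWith.eventually_abs_div_sub_le (hf : LipschitzWith L f) (v : E) (l : Filter E) :
    ∀ᶠ p in l ×ˢ 𝓝[>] (0 : ℝ), |(f (p.1 + p.2 • v) - f p.1) / p.2| ≤ L * ‖v‖ :=
  (Eventually.prod_inr self_mem_nhdsWithin l).mono fun p hp => hf.abs_div_sub_le p.1 v hp

theorem LipschitzWith.isBoundedUnder_le_div_sub (hf : LipschitzWith L f) (v : E) (l : Filter E) :
    IsBoundedUnder (· ≤ ·) (l ×ˢ 𝓝[>] (0 : ℝ)) fun p => (f (p.1 + p.2 • v) - f p.1) / p.2 :=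
  ⟨L * ‖v‖, (hf.eventually_abs_div_sub_le v l).mono fun _ hp => (le_abs_self _).trans hp⟩

theorem LipschitzWith.isCoboundedUnder_le_div_sub (hf : LipschitzWith L f) (v : E)
    (l : Filter E) [l.NeBot] :
    IsCoboundedUnder (· ≤ ·) (l ×ˢ 𝓝[>] (0 : ℝ)) fun p => (f (p.1 + p.2 • v) - f p.1) / p.2 :=
  IsBoundedUnder.isCoboundedUnder_le
    ⟨-(L * ‖v‖), (hf.eventually_abs_div_sub_le v l).mono fun _ hp => neg_le_of_abs_le hp⟩

end DifferenceQuotient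

section Clarke

variable {f : EuclideanSpace ℝ (Fin n) → ℝ} {L : ℝ≥0}

theorem clarkeDeriv_le (hf : LipschitzWith L f) (y v : EuclideanSpace ℝ (Fin n)) :
    clarkeDeriv f y v ≤ L * ‖v‖ :=
  limsup_le_of_le (hf.isCoboundedUnder_le_div_sub v _)
    ((hf.eventually_abs_div_sub_le v _).mono fun _ hp => (le_abs_self _).trans hp)

theorem upperSemicontinuous_clarkeDeriv (hf : LipschitzWith L f) (v : EuclideanSpace ℝ (Fin n)) :
    UpperSemicontinuous fun y => clarkeDeriv f y v := by
  intro y c hc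
  obtain ⟨c', hyc', hc'c⟩ := exists_between hc
  obtain ⟨p, hp, q, hq, hpq⟩ := eventually_prod_iff.1
    (eventually_lt_of_limsup_lt hyc' (hf.isBoundedUnder_le_div_sub v _))
  filter_upwards [hp.eventually_nhds] with y' hy'
  refine (limsup_le_of_le (hf.isCoboundedUnder_le_div_sub v _) ?_).trans_lt hc'c
  filter_upwards [Filter.prod_mem_prod (hy' : {z | p z} ∈ 𝓝 y') hq] with r hr
  exact (hpq hr.1 hr.2).le

theorem gradient_mem_clarkeSubdiff (hf : LipschitzWith L f) {y : EuclideanSpace ℝ (Fin n)}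
    (hd : DifferentiableAt ℝ f y) : gradient f y ∈ clarkeSubdiff f y := by
  intro v
  have hslope : Tendsto (fun t : ℝ => (f (y + t • v) - f y) / t) (𝓝[>] 0)
      (𝓝 (inner ℝ (gradient f y) v)) := by
    rw [gradient, InnerProductSpace.toDual_symm_apply]
    exact (hd.hasFDerivAt.hasLineDerivAt v).tendsto_slope_zero_right.congr fun t => by
      rw [smul_eq_mul, inv_mul_eq_div]
  have hpath : Tendsto (fun t : ℝ => (y, t)) (𝓝[>] 0) (𝓝 y ×ˢ 𝓝[>] 0) :=
    tendsto_const_nhds.prodMk tendsto_id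
  rw [← hslope.limsup_eq]
  exact hpath.limsup_comp_le_limsup
    (u := fun p : EuclideanSpace ℝ (Fin n) × ℝ => (f (p.1 + p.2 • v) - f p.1) / p.2)
    hslope.isCoboundedUnder_le (hf.isBoundedUnder_le_div_sub v _)

theorem norm_le_of_mem_clarkeSubdiff (hf : LipschitzWith L f) {y g : EuclideanSpace ℝ (Fin n)}
    (hg : g ∈ clarkeSubdiff f y) : ‖g‖ ≤ L := by
  have h : ‖g‖ * ‖g‖ ≤ L * ‖g‖ := by
    simpa only [real_inner_self_eq_norm_mul_norm] using (hg g).trans (clarkeDeriv_le hf y g)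
  rcases (norm_nonneg g).eq_or_lt with h0 | h0
  · simp [← h0]
  · exact le_of_mul_le_mul_right h h0

theorem isClosed_setOf_mem_clarkeSubdiff (hf : LipschitzWith L f) :
    IsClosed {p : EuclideanSpace ℝ (Fin n) × EuclideanSpace ℝ (Fin n) |
      p.2 ∈ clarkeSubdiff f p.1} := by
  have hgraph : {p : EuclideanSpace ℝ (Fin n) × EuclideanSpace ℝ (Fin n) |
      p.2 ∈ clarkeSubdiff f p.1} = ⋂ v, {p | inner ℝ p.2 v ≤ clarkeDeriv f p.1 v} :=
    ofPred_forall _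
  rw [hgraph]
  refine isClosed_iInter fun v => ?_
  rw [← isOpen_compl_iff, isOpen_iff_mem_nhds]
  rintro ⟨y, g⟩ (hlt : ¬inner ℝ g v ≤ clarkeDeriv f y v)
  obtain ⟨c, hyc, hcg⟩ := exists_between (not_le.1 hlt)
  have hinner : ∀ᶠ g' in 𝓝 g, c < inner ℝ g' v :=
    (continuous_id.inner continuous_const).continuousAt.eventually (lt_mem_nhds hcg)
  filter_upwards [(upperSemicontinuous_clarkeDeriv hf v y c hyc).prod_nhds hinner] with p hp
  exact not_le.2 (hp.1.trans hp.2)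

theorem IsCompact.biUnion_clarkeSubdiff (hf : LipschitzWith L f)
    {K : Set (EuclideanSpace ℝ (Fin n))} (hK : IsCompact K) :
    IsCompact (⋃ y ∈ K, clarkeSubdiff f y) := by
  have hproj : ⋃ y ∈ K, clarkeSubdiff f y =
      Prod.snd '' ({p | p.2 ∈ clarkeSubdiff f p.1} ∩ K ×ˢ closedBall 0 L) := by
    ext g
    simp only [mem_iUnion, mem_image, mem_inter_iff, mem_ofPred_eq, mem_prod, Prod.exists,
      exists_prop, mem_closedBall_zero_iff]
    exact ⟨fun ⟨y, hy, hg⟩ => ⟨y, g, ⟨hg, hy, norm_le_of_mem_clarkeSubdiff hf hg⟩, rfl⟩,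
      fun ⟨y, _, ⟨hg, hy, _⟩, rfl⟩ => ⟨y, hy, hg⟩⟩
  rw [hproj]
  exact ((hK.prod (isCompact_closedBall 0 L)).inter_left
    (isClosed_setOf_mem_clarkeSubdiff hf)).image continuous_snd

end Clarke

section UnifBall

-- `unifBall n` is definitionally the conditional measure `volume[|closedBall 0 1]`.

instance (n : ℕ) : IsProbabilityMeasure (unifBall n) :=
  cond_isProbabilityMeasure_of_finite (measure_closedBall_pos _ _ one_pos).ne'
    measure_closedBall_lt_top.ne

theorem unifBall_absolutelyContinuous (n : ℕ) : unifBall n ≪ volume :=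
  cond_absolutelyContinuous

theorem ae_mem_closedBall_unifBall (n : ℕ) : ∀ᵐ u ∂unifBall n, u ∈ closedBall 0 1 :=
  ae_cond_mem measurableSet_closedBall

theorem Continuous.integrable_unifBall {F : Type*} [NormedAddCommGroup F]
    {h : EuclideanSpace ℝ (Fin n) → F} (hh : Continuous h) : Integrable h (unifBall n) :=
  (hh.continuousOn.integrableOn_compact (isCompact_closedBall 0 1)).smul_measure
    (ENNReal.inv_ne_top.2 (measure_closedBall_pos _ _ one_pos).ne')

end UnifBall

/-- The gradient of the uniform smoothing of an `L`-Lipschitz `f` belongs to the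
`μ`-Goldstein subdifferential of `f`. -/
theorem smoothing_gradient_mem_goldstein (f : EuclideanSpace ℝ (Fin n) → ℝ) (L : ℝ≥0)
    (hf : LipschitzWith L f) (μ : ℝ) (hμ : 0 < μ) (x : EuclideanSpace ℝ (Fin n)) :
    gradient (fun z => ∫ u, f (z + μ • u) ∂(unifBall n)) x ∈ goldsteinSubdiff μ f x := by
  have hdiff : ∀ᵐ u ∂unifBall n, DifferentiableAt ℝ f (x + μ • u) :=
    (unifBall_absolutelyContinuous n).ae_le (hf.ae_differentiableAt_add_smul volume x hμ.ne')
  obtain ⟨hint, hgrad⟩ := hf.hasGradientAt_integral_comp_add (measurable_const_smul μ)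
    (hf.continuous.comp (continuous_const.add (continuous_const_smul μ))).integrable_unifBall
    hdiff
  rw [hgrad.gradient]
  refine (convex_convexHull ℝ _).integral_mem
    ((isCompact_closedBall x μ).biUnion_clarkeSubdiff hf).convexHull.isClosed ?_ hint
  filter_upwards [hdiff, ae_mem_closedBall_unifBall n] with u hu hball
  have hxu : x + μ • u ∈ closedBall x μ := by
    rw [mem_closedBall, dist_self_add_left, norm_smul, Real.norm_of_nonneg hμ.le]
    exact mul_le_of_le_one_right hμ.le (mem_closedBall_zero_iff.1 hball)
  exact subset_convexHull ℝ _ (mem_biUnion hxu (gradient_mem_clarkeSubdiff hf hu))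
end

section
/- Let f : ℝⁿ → ℝ be L-Lipschitz. Then for any x, x' ∈ ℝⁿ there exist λ ∈ (0,1) and g ∈ ∂̄f(λx + (1-λ)x') such that f(x) - f(x') = gᵀ(x - x') (Lebourg mean value theorem). -/
/-!
Put `v = x - x'`, `c = f x - f x'`. The function `φ t = f (x' + t • v) - t * c` takes the same
value at `0` and `1`, so it has an extremum at some `t₀ ∈ (0, 1)`; let `z = x' + t₀ • v`.
At a minimum the difference quotients `(f (z + s • v) - f z) / s` are eventually `≥ c`; at a
maximum so are `(f z - f (z - s • v)) / s`, whose base point `z - s • v` moves, which the Clarke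
derivative allows. Either way `c ≤ f°(z; v)`, and symmetrically `-c ≤ f°(z; -v)`. For Lipschitz
`f` the Clarke derivative `f°(z; ·)` is sublinear, so Hahn–Banach extends `r • v ↦ r * c` to a
linear functional below it, which is a Clarke subgradient `g` at `z` with `⟪g, v⟫ = c`.
-/

open Filter
open scoped NNReal Topology

variable {n : ℕ}

theorem exists_linearMap_apply_eq_of_le_sublinear {E : Type*} [AddCommGroup E] [Module ℝ E]
    {N : E → ℝ} (N_hom : ∀ t : ℝ, 0 < t → ∀ x, N (t • x) = t * N x)
    (N_add : ∀ x y, N (x + y) ≤ N x + N y) {v : E} {c : ℝ} (hv : c ≤ N v)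
    (hnv : -c ≤ N (-v)) :
    ∃ g : E →ₗ[ℝ] ℝ, g v = c ∧ ∀ x, g x ≤ N x := by
  have N_zero : N 0 = 0 := by grind [N_hom 2 (by norm_num) 0, smul_zero]
  have h_line : ∀ r : ℝ, r * c ≤ N (r • v) := by
    intro r
    rcases lt_trichotomy r 0 with hr | rfl | hr
    · rw [show r • v = -r • -v by module, N_hom _ (neg_pos.2 hr)]
      nlinarith
    · simp [N_zero]
    · rw [N_hom _ hr]
      exact mul_le_mul_of_nonneg_left hv hr.le
  have h_wd : ∀ r : ℝ, r • v = 0 → r • c = 0 := by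
    intro r hr
    rcases smul_eq_zero.1 hr with rfl | rfl
    · exact zero_smul _ _
    · rw [neg_zero, N_zero] at hnv
      rw [N_zero] at hv
      exact smul_eq_zero.2 (Or.inr (by linarith))
  obtain ⟨g, hg_ext, hg_le⟩ := exists_extension_of_le_sublinear
    (LinearPMap.mkSpanSingleton' v c h_wd) N N_hom N_add (by
      rintro ⟨_, hx⟩
      obtain ⟨r, rfl⟩ := Submodule.mem_span_singleton.1 hx
      rw [LinearPMap.mkSpanSingleton'_apply]
      exact h_line r)
  refine ⟨g, ?_, hg_le⟩
  have hv_mem := Submodule.mem_span_singleton_self (R := ℝ) v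
  exact (hg_ext ⟨v, hv_mem⟩).trans (LinearPMap.mkSpanSingleton'_apply_self v c h_wd hv_mem)

section Clarke

variable {f : EuclideanSpace ℝ (Fin n) → ℝ} {L : ℝ≥0} {x v : EuclideanSpace ℝ (Fin n)}

noncomputable def clarkeQuotient (f : EuclideanSpace ℝ (Fin n) → ℝ)
    (v : EuclideanSpace ℝ (Fin n)) (p : EuclideanSpace ℝ (Fin n) × ℝ) : ℝ :=
  (f (p.1 + p.2 • v) - f p.1) / p.2

theorem clarkeDeriv_eq_limsup (f : EuclideanSpace ℝ (Fin n) → ℝ)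
    (x v : EuclideanSpace ℝ (Fin n)) :
    clarkeDeriv f x v = limsup (clarkeQuotient f v) (𝓝 x ×ˢ 𝓝[>] 0) :=
  rfl

theorem eventually_prod_nhdsGT_snd_pos {X : Type*} (l : Filter X) :
    ∀ᶠ p in l ×ˢ 𝓝[>] (0 : ℝ), 0 < p.2 :=
  tendsto_snd.eventually self_mem_nhdsWithin

theorem tendsto_snd_prod_nhdsGT {X : Type*} (l : Filter X) :
    Tendsto Prod.snd (l ×ˢ 𝓝[>] (0 : ℝ)) (𝓝 0) :=
  tendsto_snd.mono_right nhdsWithin_le_nhds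

theorem LipschitzWith.abs_clarkeQuotient_le (hf : LipschitzWith L f)
    (v : EuclideanSpace ℝ (Fin n)) {p : EuclideanSpace ℝ (Fin n) × ℝ} (hp : 0 < p.2) :
    |clarkeQuotient f v p| ≤ L * ‖v‖ := by
  rw [clarkeQuotient, abs_div, abs_of_pos hp, div_le_iff₀ hp, ← Real.dist_eq]
  calc dist (f (p.1 + p.2 • v)) (f p.1) ≤ L * dist (p.1 + p.2 • v) p.1 := hf.dist_le_mul _ _
    _ = L * ‖v‖ * p.2 := by
      rw [dist_self_add_left, norm_smul, Real.norm_of_nonneg hp.le, mul_comm p.2, mul_assoc]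

theorem LipschitzWith.isBoundedUnder_le_clarkeQuotient (hf : LipschitzWith L f)
    {l : Filter (EuclideanSpace ℝ (Fin n) × ℝ)} (hl : ∀ᶠ p in l, 0 < p.2) :
    l.IsBoundedUnder (· ≤ ·) (clarkeQuotient f v) :=
  isBoundedUnder_of_eventually_le
    (hl.mono fun _ hp => (abs_le.1 (hf.abs_clarkeQuotient_le v hp)).2)

theorem LipschitzWith.isBoundedUnder_ge_clarkeQuotient (hf : LipschitzWith L f)
    {l : Filter (EuclideanSpace ℝ (Fin n) × ℝ)} (hl : ∀ᶠ p in l, 0 < p.2) :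
    l.IsBoundedUnder (· ≥ ·) (clarkeQuotient f v) :=
  isBoundedUnder_of_eventually_ge
    (hl.mono fun _ hp => (abs_le.1 (hf.abs_clarkeQuotient_le v hp)).1)

theorem LipschitzWith.isCoboundedUnder_le_clarkeQuotient (hf : LipschitzWith L f)
    {l : Filter (EuclideanSpace ℝ (Fin n) × ℝ)} [l.NeBot] (hl : ∀ᶠ p in l, 0 < p.2) :
    l.IsCoboundedUnder (· ≤ ·) (clarkeQuotient f v) :=
  (hf.isBoundedUnder_ge_clarkeQuotient hl).isCoboundedUnder_le

theorem LipschitzWith.limsup_clarkeQuotient_comp_le {α : Type*} (hf : LipschitzWith L f)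
    {l : Filter α} [l.NeBot] {m : α → EuclideanSpace ℝ (Fin n) × ℝ}
    (hm : Tendsto m l (𝓝 x ×ˢ 𝓝[>] 0)) :
    limsup (clarkeQuotient f v ∘ m) l ≤ clarkeDeriv f x v := by
  have hpos := eventually_prod_nhdsGT_snd_pos (𝓝 x)
  exact hm.limsup_comp_le_limsup
    (hf.isCoboundedUnder_le_clarkeQuotient (eventually_map.2 (hm.eventually hpos)))
    (hf.isBoundedUnder_le_clarkeQuotient hpos)

theorem LipschitzWith.le_clarkeDeriv_of_tendsto (hf : LipschitzWith L f) {c : ℝ}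
    {b : ℝ → EuclideanSpace ℝ (Fin n)} (hb : Tendsto b (𝓝[>] 0) (𝓝 x))
    (h : ∀ᶠ t in 𝓝[>] 0, c ≤ (f (b t + t • v) - f (b t)) / t) :
    c ≤ clarkeDeriv f x v := by
  have hm : Tendsto (fun t => (b t, t)) (𝓝[>] 0) (𝓝 x ×ˢ 𝓝[>] 0) := hb.prodMk tendsto_id
  refine le_trans ?_ (hf.limsup_clarkeQuotient_comp_le hm)
  exact le_limsup_of_frequently_le h.frequently (hf.isBoundedUnder_le_clarkeQuotient
    (eventually_map.2 (hm.eventually (eventually_prod_nhdsGT_snd_pos (𝓝 x)))))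

theorem LipschitzWith.clarkeDeriv_smul_le (hf : LipschitzWith L f) {t : ℝ} (ht : 0 < t) :
    clarkeDeriv f x (t • v) ≤ t * clarkeDeriv f x v := by
  set σ : EuclideanSpace ℝ (Fin n) × ℝ → EuclideanSpace ℝ (Fin n) × ℝ :=
    fun p => (p.1, t * p.2)
  have hpos := eventually_prod_nhdsGT_snd_pos (𝓝 x)
  have hσ : Tendsto σ (𝓝 x ×ˢ 𝓝[>] 0) (𝓝 x ×ˢ 𝓝[>] 0) := by
    refine tendsto_fst.prodMk (tendsto_nhdsWithin_of_tendsto_nhds_of_eventually_within _ ?_ ?_)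
    · simpa using (tendsto_snd_prod_nhdsGT (𝓝 x)).const_mul t
    · exact hpos.mono fun p hp => mul_pos ht hp
  have hquot : clarkeQuotient f (t • v) = (t * ·) ∘ (clarkeQuotient f v ∘ σ) := by
    ext p
    simp only [clarkeQuotient, Function.comp_apply, σ, smul_smul, mul_comm p.2 t]
    rcases eq_or_ne p.2 0 with hp | hp
    · simp [hp]
    · field_simp
  have hσ_cobdd : (map σ (𝓝 x ×ˢ 𝓝[>] 0)).IsCoboundedUnder (· ≤ ·) (clarkeQuotient f v) :=
    hf.isCoboundedUnder_le_clarkeQuotient (eventually_map.2 (hσ.eventually hpos))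
  rw [clarkeDeriv_eq_limsup, hquot,
    ← (monotone_mul_left_of_nonneg ht.le).map_limsup_of_continuousAt (clarkeQuotient f v ∘ σ)
      (continuous_const_mul t).continuousAt
      (hσ.isBoundedUnder_comp (hf.isBoundedUnder_le_clarkeQuotient hpos)) hσ_cobdd]
  exact mul_le_mul_of_nonneg_left (hf.limsup_clarkeQuotient_comp_le hσ) ht.le

theorem LipschitzWith.clarkeDeriv_smul (hf : LipschitzWith L f) {t : ℝ} (ht : 0 < t) :
    clarkeDeriv f x (t • v) = t * clarkeDeriv f x v := by
  refine le_antisymm (hf.clarkeDeriv_smul_le ht) ?_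
  have := hf.clarkeDeriv_smul_le (x := x) (v := t • v) (inv_pos.2 ht)
  rw [inv_smul_smul₀ ht.ne'] at this
  rwa [← le_inv_mul_iff₀ ht]

theorem LipschitzWith.clarkeDeriv_add_le (hf : LipschitzWith L f)
    (a b : EuclideanSpace ℝ (Fin n)) :
    clarkeDeriv f x (a + b) ≤ clarkeDeriv f x a + clarkeDeriv f x b := by
  set τ : EuclideanSpace ℝ (Fin n) × ℝ → EuclideanSpace ℝ (Fin n) × ℝ :=
    fun p => (p.1 + p.2 • a, p.2)
  have hτ : Tendsto τ (𝓝 x ×ˢ 𝓝[>] 0) (𝓝 x ×ˢ 𝓝[>] 0) := by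
    refine Tendsto.prodMk ?_ tendsto_snd
    simpa using tendsto_fst.add ((tendsto_snd_prod_nhdsGT (𝓝 x)).smul_const a)
  have hquot : clarkeQuotient f (a + b) = clarkeQuotient f a + clarkeQuotient f b ∘ τ := by
    ext p
    simp only [clarkeQuotient, Pi.add_apply, Function.comp_apply, τ, smul_add, add_assoc]
    ring
  have hpos := eventually_prod_nhdsGT_snd_pos (𝓝 x)
  have hτ_cobdd : (map τ (𝓝 x ×ˢ 𝓝[>] 0)).IsCoboundedUnder (· ≤ ·) (clarkeQuotient f b) :=
    hf.isCoboundedUnder_le_clarkeQuotient (eventually_map.2 (hτ.eventually hpos))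
  rw [clarkeDeriv_eq_limsup, hquot]
  exact (limsup_add_le (hf.isBoundedUnder_ge_clarkeQuotient hpos)
    (hf.isBoundedUnder_le_clarkeQuotient hpos) hτ_cobdd
    (hτ.isBoundedUnder_comp (hf.isBoundedUnder_le_clarkeQuotient hpos))).trans
    (add_le_add_right (hf.limsup_clarkeQuotient_comp_le hτ) _)

theorem LipschitzWith.exists_mem_clarkeSubdiff_inner_eq (hf : LipschitzWith L f) {c : ℝ}
    (hv : c ≤ clarkeDeriv f x v) (hnv : -c ≤ clarkeDeriv f x (-v)) :
    ∃ g ∈ clarkeSubdiff f x, inner ℝ g v = c := by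
  obtain ⟨φ, hφv, hφ_le⟩ := exists_linearMap_apply_eq_of_le_sublinear (N := clarkeDeriv f x)
    (fun _ ht _ => hf.clarkeDeriv_smul ht) hf.clarkeDeriv_add_le hv hnv
  let g := (InnerProductSpace.toDual ℝ _).symm (LinearMap.toContinuousLinearMap φ)
  have hg : ∀ w, inner ℝ g w = φ w := fun _ => InnerProductSpace.toDual_symm_apply
  exact ⟨g, fun w => (hg w).trans_le (hφ_le w), (hg v).trans hφv⟩

theorem LipschitzWith.le_clarkeDeriv_of_isLocalExtr (hf : LipschitzWith L f) {c t₀ : ℝ}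
    (h : IsLocalExtr (fun t => f (x + t • v) - t * c) t₀) :
    c ≤ clarkeDeriv f (x + t₀ • v) v := by
  have h_shift : ∀ a : ℝ, Tendsto (fun s => t₀ + a * s) (𝓝[>] 0) (𝓝 t₀) := fun a => by
    simpa using ((tendsto_nhdsWithin_of_tendsto_nhds (tendsto_id (x := 𝓝 (0 : ℝ)))).const_mul a
      |>.const_add t₀)
  rcases h with hmin | hmax
  · refine hf.le_clarkeDeriv_of_tendsto tendsto_const_nhds ?_
    filter_upwards [(h_shift 1).eventually hmin, self_mem_nhdsWithin] with s hs (hs0 : 0 < s)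
    rw [show x + (t₀ + 1 * s) • v = x + t₀ • v + s • v by module] at hs
    rw [le_div_iff₀ hs0]
    linarith
  · have hline : Continuous fun t : ℝ => x + t • v := by fun_prop
    refine hf.le_clarkeDeriv_of_tendsto ((hline.tendsto t₀).comp (h_shift (-1))) ?_
    filter_upwards [(h_shift (-1)).eventually hmax, self_mem_nhdsWithin] with s hs (hs0 : 0 < s)
    simp only [Function.comp_apply] at hs ⊢
    rw [show x + (t₀ + -1 * s) • v + s • v = x + t₀ • v by module, le_div_iff₀ hs0]
    linarith

theorem LipschitzWith.exists_mem_clarkeSubdiff_of_isLocalExtr (hf : LipschitzWith L f)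
    {c t₀ : ℝ} (h : IsLocalExtr (fun t => f (x + t • v) - t * c) t₀) :
    ∃ g ∈ clarkeSubdiff f (x + t₀ • v), inner ℝ g v = c := by
  have h_neg : IsLocalExtr (fun t => f (x + t • -v) - t * -c) (-t₀) := by
    rw [← neg_neg t₀] at h
    convert h.comp_continuous continuous_neg.continuousAt using 2 with t
    simp only [Function.comp_apply, smul_neg, neg_smul, mul_neg, neg_mul]
  have h_neg_le := hf.le_clarkeDeriv_of_isLocalExtr h_neg
  rw [neg_smul_neg] at h_neg_le
  exact hf.exists_mem_clarkeSubdiff_inner_eq (hf.le_clarkeDeriv_of_isLocalExtr h) h_neg_le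

end Clarke

/-- Lebourg mean value theorem: for `L`-Lipschitz `f` and any `x, x'` there exist
`λ ∈ (0,1)` and `g ∈ ∂̄f(λx + (1-λ)x')` with `f(x) - f(x') = ⟪g, x - x'⟫`. -/
theorem lebourg_mean_value (f : EuclideanSpace ℝ (Fin n) → ℝ) (L : ℝ≥0)
    (hf : LipschitzWith L f) (x x' : EuclideanSpace ℝ (Fin n)) :
    ∃ lam ∈ Set.Ioo (0 : ℝ) 1, ∃ g ∈ clarkeSubdiff f (lam • x + (1 - lam) • x'),
      f x - f x' = (inner ℝ g (x - x') : ℝ) := by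
  set φ : ℝ → ℝ := fun t => f (x' + t • (x - x')) - t * (f x - f x')
  have hφ_cont : Continuous φ := by
    have := hf.continuous
    fun_prop
  have hφ_ends : φ 0 = φ 1 := by simp [φ]
  obtain ⟨t₀, ht₀, h_extr⟩ := exists_Ioo_extr_on_Icc zero_lt_one hφ_cont.continuousOn hφ_ends
  obtain ⟨g, hg, hg_inner⟩ :=
    hf.exists_mem_clarkeSubdiff_of_isLocalExtr (h_extr.isLocalExtr (Icc_mem_nhds ht₀.1 ht₀.2))
  refine ⟨t₀, ht₀, g, ?_, hg_inner.symm⟩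
  rwa [show t₀ • x + (1 - t₀) • x' = x' + t₀ • (x - x') by module]
end

section
/- Let φ = f_μ + r with f_μ differentiable with ρ-Lipschitz gradient and r proper, closed, convex. Fix ρ̄ ∈ (ρ, 2ρ], α > 0 and set ζ = 1 - αρ̄. If x̂ = prox_{ρ̄^{-1}φ}(x), then x̂ satisfies the fixed-point equation x̂ = prox_{αr}(αρ̄ x - α∇f_μ(x̂) + ζ x̂). -/
/-!
The point `xh` minimizes the sum of the differentiable function `fμ + (ρb / 2) ‖· - x‖²` and the
convex function `r`, so first-order optimality makes `-(∇fμ(xh) + ρb (xh - x))` a subgradient of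
`r` at `xh`. For `v = α ρb x - α ∇fμ(xh) + ζ xh` this vector is `(v - xh) / α`, and that is exactly
the (sufficient) optimality condition for `xh` to minimize `r + ‖· - v‖² / (2α)`.
-/

open Set
open scoped RealInnerProductSpace

theorem IsMinOn.sub_apply_le_of_hasFDerivAt_of_convexOn {E : Type*} [NormedAddCommGroup E]
    [NormedSpace ℝ E] {h r : E → ℝ} {h' : E →L[ℝ] ℝ} {a : E}
    (hmin : IsMinOn (fun w => h w + r w) univ a) (hh : HasFDerivAt h h' a)
    (hr : ConvexOn ℝ univ r) (w : E) : r a - h' (w - a) ≤ r w := by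
  set d := w - a
  -- On `[0, 1]` the chord of `r` dominates `r`, so `g` is minimized at `0` along with `h + r`.
  let g : ℝ → ℝ := fun t => h (a + t • d) + t * (r w - r a)
  have hline : HasDerivAt (fun t : ℝ => a + t • d) d 0 := by
    simpa using ((hasDerivAt_id (0 : ℝ)).smul_const d).const_add a
  have hg : HasDerivAt g (h' d + (r w - r a)) 0 := by
    have hh' : HasFDerivAt h h' (a + (0 : ℝ) • d) := by simpa using hh
    exact (hh'.comp_hasDerivAt 0 hline).add
      (by simpa using (hasDerivAt_id (0 : ℝ)).mul_const (r w - r a))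
  have hg_min : IsMinOn g (Icc 0 1) 0 := by
    intro t ⟨ht0, ht1⟩
    have hchord : r (a + t • d) ≤ r a + t * (r w - r a) := by
      have := hr.2 (mem_univ a) (mem_univ w) (sub_nonneg.2 ht1) ht0 (sub_add_cancel 1 t)
      rw [show (1 - t) • a + t • w = a + t • d by simp only [d]; module] at this
      simp only [smul_eq_mul] at this
      linarith
    have := hmin (mem_univ (a + t • d))
    simp only [mem_ofPred_eq, g, zero_smul, add_zero, zero_mul] at this ⊢
    linarith
  have h_one : (1 : ℝ) ∈ posTangentConeAt (Icc 0 1) 0 :=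
    mem_posTangentConeAt_of_segment_subset (by simp [segment_eq_Icc])
  have := hg_min.localize.hasFDerivWithinAt_nonneg hg.hasFDerivAt.hasFDerivWithinAt h_one
  simp only [ContinuousLinearMap.toSpanSingleton_apply, one_smul] at this
  linarith

theorem isMinOn_add_norm_sub_sq_of_inner_le {E : Type*} [NormedAddCommGroup E]
    [InnerProductSpace ℝ E] {r : E → ℝ} {α : ℝ} (hα : 0 < α) {a v : E}
    (h : ∀ w, ⟪v - a, w - a⟫ ≤ α * (r w - r a)) :
    IsMinOn (fun w => r w + 1 / (2 * α) * ‖w - v‖ ^ 2) univ a := by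
  intro w _
  have hexpand : ‖w - v‖ ^ 2 = ‖a - v‖ ^ 2 - 2 * ⟪v - a, w - a⟫ + ‖w - a‖ ^ 2 := by
    rw [show w - v = (w - a) - (v - a) by abel, norm_sub_sq_real, real_inner_comm,
      ← norm_neg (v - a), neg_sub]
    ring
  have := h w
  simp only [mem_ofPred_eq, hexpand]
  field_simp
  nlinarith [sq_nonneg ‖w - a‖]

open scoped NNReal

variable {n : ℕ}

theorem prox_fixed_point_general
    (fμ : EuclideanSpace ℝ (Fin n) → ℝ) (hfμ : Differentiable ℝ fμ)
    (r : EuclideanSpace ℝ (Fin n) → ℝ) (hr : ConvexOn ℝ Set.univ r)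
    (ρb : ℝ) (α : ℝ) (hα : 0 < α)
    (ζ : ℝ) (hζ : ζ = 1 - α * ρb) (x xh : EuclideanSpace ℝ (Fin n))
    (hxh : IsMinOn (fun w => fμ w + r w + (ρb / 2) * ‖w - x‖ ^ 2) Set.univ xh) :
    IsMinOn (fun w =>
        r w + (1 / (2 * α)) * ‖w - ((α * ρb) • x - α • gradient fμ xh + ζ • xh)‖ ^ 2)
      Set.univ xh := by
  have hmin : IsMinOn (fun w => (fμ w + ρb / 2 * ‖w - x‖ ^ 2) + r w) univ xh := by
    simpa only [add_right_comm] using hxh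
  have hderiv := (hfμ xh).hasGradientAt.hasFDerivAt.add
    (((hasFDerivAt_id xh).sub_const x).norm_sq.const_mul (ρb / 2))
  have hsubgrad := hmin.sub_apply_le_of_hasFDerivAt_of_convexOn hderiv hr
  refine isMinOn_add_norm_sub_sq_of_inner_le hα fun w => ?_
  have hv : (α * ρb) • x - α • gradient fμ xh + ζ • xh - xh
      = -α • (gradient fμ xh + ρb • (xh - x)) := by
    rw [hζ]; module
  have hw := hsubgrad w
  simp only [add_apply, InnerProductSpace.toDual_apply_apply, smul_apply,
    ContinuousLinearMap.comp_apply, innerSL_apply_apply, id, ContinuousLinearMap.id_apply,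
    smul_eq_mul, nsmul_eq_mul, Nat.cast_ofNat] at hw
  rw [hv, real_inner_smul_left, inner_add_left, real_inner_smul_left]
  linarith [mul_le_mul_of_nonneg_left hw hα.le]

/-- Fixed-point characterization of the proximal point of `φ = f_μ + r`:
if `xh = prox_{ρ̄⁻¹ φ}(x)` then `xh = prox_{α r}(α ρ̄ x - α ∇f_μ(xh) + ζ xh)`
with `ζ = 1 - α ρ̄`. The proximal points are expressed as minimizers. -/
theorem prox_fixed_point (ρ : ℝ≥0) (hρ : 0 < ρ)
    (fμ : EuclideanSpace ℝ (Fin n) → ℝ) (hfμ : Differentiable ℝ fμ)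
    (hgrad : LipschitzWith ρ (gradient fμ))
    (r : EuclideanSpace ℝ (Fin n) → ℝ) (hr : ConvexOn ℝ Set.univ r)
    (hrlsc : LowerSemicontinuous r)
    (ρb : ℝ) (hρb : ρb ∈ Set.Ioc (ρ : ℝ) (2 * ρ)) (α : ℝ) (hα : 0 < α)
    (ζ : ℝ) (hζ : ζ = 1 - α * ρb) (x xh : EuclideanSpace ℝ (Fin n))
    (hxh : IsMinOn (fun w => fμ w + r w + (ρb / 2) * ‖w - x‖ ^ 2) Set.univ xh) :
    IsMinOn (fun w =>
        r w + (1 / (2 * α)) * ‖w - ((α * ρb) • x - α • gradient fμ xh + ζ • xh)‖ ^ 2)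
      Set.univ xh :=
  prox_fixed_point_general fμ hfμ r hr ρb α hα ζ hζ x xh hxh
end
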